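/- Let D₁ and D₂ both be global minimizers of J̃ over the convex set K. Then [A, D₁ − D₂] = 0; consequently the gradient ∇J̃(D) = C − (1/2)[[A,D],A] takes the same value H⋆ at D₁ and at D₂, i.e. the gradient of J̃ is constant on the set of minimizers of J̃ over K. -/

import Mathlib

open Matrix Filter Topology

noncomputable section

/-- Commutator of matrices. -/
def commut {M : ℕ} (X Y : Matrix (Fin M) (Fin M) ℝ) : Matrix (Fin M) (Fin M) ℝ :=
  X * Y - Y * X

/-- `K = CH(Gr(m,ℝ^M))`: symmetric `D` with `0 ⪯ D ⪯ I` and `Tr D = m`. -/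
def Kset (M m : ℕ) (D : Matrix (Fin M) (Fin M) ℝ) : Prop :=
  D.PosSemidef ∧ (1 - D).PosSemidef ∧ D.trace = (m : ℝ)

/-- Squared Frobenius norm `‖X‖² = Tr(Xᵀ X)`. -/
def fnormSq {M : ℕ} (X : Matrix (Fin M) (Fin M) ℝ) : ℝ := (Xᵀ * X).trace

/-- The convexified functional `J̃(D) = Tr(CD) + (1/4)‖[A,D]‖²` with `C = B − (1/2)A²`. -/
def Jt {M : ℕ} (A B D : Matrix (Fin M) (Fin M) ℝ) : ℝ :=
  ((B - (1 / 2 : ℝ) • (A * A)) * D).trace + (1 / 4) * fnormSq (commut A D)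

/-!
`J̃` is affine in `D` plus `¼‖[A, D]‖²`, so along a segment it falls short of its chords
by `ab/4 · ‖[A, D₁ − D₂]‖²`. At the midpoint of two minimizers (which lies in the convex
set `K`) this gap would push `J̃` below the common minimum unless `[A, D₁ − D₂] = 0`;
then `[[A, D₁], A] = [[A, D₂], A]`, so the gradients agree.
-/

section Commut

variable {M : ℕ} (A X Y : Matrix (Fin M) (Fin M) ℝ)

lemma commut_add_right : commut A (X + Y) = commut A X + commut A Y := by
  simp only [commut, Matrix.mul_add, Matrix.add_mul]
  abel

lemma commut_sub_right : commut A (X - Y) = commut A X - commut A Y := by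
  simp only [commut, Matrix.mul_sub, Matrix.sub_mul]
  abel

lemma commut_smul_right (a : ℝ) : commut A (a • X) = a • commut A X := by
  simp only [commut, Matrix.mul_smul, Matrix.smul_mul, smul_sub]

lemma commut_eq_of_commut_sub_eq_zero (h : commut A (X - Y) = 0) :
    commut A X = commut A Y := by
  rwa [commut_sub_right, sub_eq_zero] at h

end Commut

section FrobeniusNorm

variable {M : ℕ}

lemma fnormSq_eq_sum (X : Matrix (Fin M) (Fin M) ℝ) :
    fnormSq X = ∑ j, ∑ i, X i j ^ 2 := by
  simp [fnormSq, Matrix.trace, Matrix.diag, Matrix.mul_apply, sq]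

lemma fnormSq_nonneg (X : Matrix (Fin M) (Fin M) ℝ) : 0 ≤ fnormSq X := by
  rw [fnormSq_eq_sum]
  positivity

lemma fnormSq_eq_zero_iff {X : Matrix (Fin M) (Fin M) ℝ} : fnormSq X = 0 ↔ X = 0 := by
  rw [fnormSq, ← conjTranspose_eq_transpose_of_trivial]
  exact trace_conjTranspose_mul_self_eq_zero_iff

lemma fnormSq_add_smul_of_add_eq_one (X Y : Matrix (Fin M) (Fin M) ℝ) {a b : ℝ}
    (hab : a + b = 1) :
    fnormSq (a • X + b • Y) = a * fnormSq X + b * fnormSq Y - a * b * fnormSq (X - Y) := by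
  obtain rfl : b = 1 - a := by linarith
  simp only [fnormSq_eq_sum, Matrix.add_apply, Matrix.sub_apply, Matrix.smul_apply, smul_eq_mul,
    Finset.mul_sum, ← Finset.sum_add_distrib, ← Finset.sum_sub_distrib]
  refine Finset.sum_congr rfl fun j _ => Finset.sum_congr rfl fun i _ => ?_
  ring

end FrobeniusNorm

lemma convex_Kset (M m : ℕ) : Convex ℝ {D : Matrix (Fin M) (Fin M) ℝ | Kset M m D} := by
  intro D₁ hD₁ D₂ hD₂ a b ha hb hab
  refine ⟨(hD₁.1.smul ha).add (hD₂.1.smul hb), ?_, ?_⟩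
  · have h : a • (1 - D₁) + b • (1 - D₂) =
        (a + b) • (1 : Matrix (Fin M) (Fin M) ℝ) - (a • D₁ + b • D₂) := by
      module
    rw [hab, one_smul] at h
    rw [← h]
    exact (hD₁.2.1.smul ha).add (hD₂.2.1.smul hb)
  · rw [trace_add, trace_smul, trace_smul, hD₁.2.2, hD₂.2.2, smul_eq_mul, smul_eq_mul,
      ← add_mul, hab, one_mul]

lemma Jt_add_smul_of_add_eq_one {M : ℕ} (A B D₁ D₂ : Matrix (Fin M) (Fin M) ℝ) {a b : ℝ}
    (hab : a + b = 1) :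
    Jt A B (a • D₁ + b • D₂) =
      a * Jt A B D₁ + b * Jt A B D₂ - a * b / 4 * fnormSq (commut A (D₁ - D₂)) := by
  rw [Jt, Jt, Jt, commut_add_right, commut_smul_right, commut_smul_right,
    fnormSq_add_smul_of_add_eq_one _ _ hab, ← commut_sub_right, Matrix.mul_add, trace_add,
    Matrix.mul_smul, Matrix.mul_smul, trace_smul, trace_smul, smul_eq_mul, smul_eq_mul]
  ring

lemma commut_sub_eq_zero_of_minimizers {M : ℕ} {S : Set (Matrix (Fin M) (Fin M) ℝ)}
    (hS : Convex ℝ S) (A B : Matrix (Fin M) (Fin M) ℝ) {D₁ D₂ : Matrix (Fin M) (Fin M) ℝ}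
    (hD₁ : D₁ ∈ S) (hD₂ : D₂ ∈ S)
    (hmin₁ : ∀ D ∈ S, Jt A B D₁ ≤ Jt A B D)
    (hmin₂ : ∀ D ∈ S, Jt A B D₂ ≤ Jt A B D) :
    commut A (D₁ - D₂) = 0 := by
  have hhalf : (1 / 2 : ℝ) + 1 / 2 = 1 := by norm_num
  have hmid := hmin₁ _ (hS hD₁ hD₂ (by norm_num) (by norm_num) hhalf)
  have hJ : Jt A B D₁ = Jt A B D₂ := le_antisymm (hmin₁ D₂ hD₂) (hmin₂ D₁ hD₁)
  rw [Jt_add_smul_of_add_eq_one A B D₁ D₂ hhalf, ← hJ] at hmid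
  exact fnormSq_eq_zero_iff.mp
    (le_antisymm (by linarith) (fnormSq_nonneg (commut A (D₁ - D₂))))

theorem stmt_5_general {M m : ℕ}
    (A B : Matrix (Fin M) (Fin M) ℝ) (D₁ D₂ : Matrix (Fin M) (Fin M) ℝ)
    (hD₁ : Kset M m D₁) (hD₂ : Kset M m D₂)
    (hmin₁ : ∀ D : Matrix (Fin M) (Fin M) ℝ, Kset M m D → Jt A B D₁ ≤ Jt A B D)
    (hmin₂ : ∀ D : Matrix (Fin M) (Fin M) ℝ, Kset M m D → Jt A B D₂ ≤ Jt A B D) :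
    commut A (D₁ - D₂) = 0 ∧
      (B - (1 / 2 : ℝ) • (A * A)) - (1 / 2 : ℝ) • commut (commut A D₁) A =
        (B - (1 / 2 : ℝ) • (A * A)) - (1 / 2 : ℝ) • commut (commut A D₂) A := by
  have hcomm := commut_sub_eq_zero_of_minimizers (convex_Kset M m) A B hD₁ hD₂ hmin₁ hmin₂
  exact ⟨hcomm, by rw [commut_eq_of_commut_sub_eq_zero A D₁ D₂ hcomm]⟩

/-- if `D₁, D₂` are both global minimizers of `J̃` over `K`, then
`[A, D₁ − D₂] = 0`; consequently `∇J̃(D) = C − (1/2)[[A,D],A]` takes the same value at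
`D₁` and `D₂`. -/
theorem stmt_5 {M m : ℕ} (hM : 2 ≤ M) (hm1 : 1 ≤ m) (hm2 : m ≤ M - 1)
    (A B : Matrix (Fin M) (Fin M) ℝ) (hA : A.IsSymm) (hApsd : A.PosSemidef)
    (hB : B.IsSymm) (D₁ D₂ : Matrix (Fin M) (Fin M) ℝ)
    (hD₁ : Kset M m D₁) (hD₂ : Kset M m D₂)
    (hmin₁ : ∀ D : Matrix (Fin M) (Fin M) ℝ, Kset M m D → Jt A B D₁ ≤ Jt A B D)
    (hmin₂ : ∀ D : Matrix (Fin M) (Fin M) ℝ, Kset M m D → Jt A B D₂ ≤ Jt A B D) :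
    commut A (D₁ - D₂) = 0 ∧
      (B - (1 / 2 : ℝ) • (A * A)) - (1 / 2 : ℝ) • commut (commut A D₁) A =
        (B - (1 / 2 : ℝ) • (A * A)) - (1 / 2 : ℝ) • commut (commut A D₂) A :=
  stmt_5_general A B D₁ D₂ hD₁ hD₂ hmin₁ hmin₂
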